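/- arXiv:1609.06151 — 2 statements merged into one kernel-verified Lean document; each statement's English description precedes it below -/
import Mathlib

section
/- With Y multiplication by x, Z the formal derivative on ℂ[x], H = Y∘Z, G = R(H)∘Z for a fixed polynomial R of degree d, and S(X) = R(X−1)·X: for every j ≥ 1, ad_G^j(Y) = (Δ^j S)(H)∘G^{j−1}, where Δ^j is the j-th iterated forward difference (Δf)(X) = f(X+1) − f(X). In particular ad_G^{d+2}(Y) = 0, and the automorphism σ = e^{ad_G} satisfies σ(G) = G, σ(H) = H + G, and σ(Y) = Y + Σ_{j=1}^{d+1} (1/j!)·(Δ^j S)(H)∘G^{j−1}. -/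
open Polynomial Finset

noncomputable section

/-- `E` is the ℂ-algebra of ℂ-linear endomorphisms of `ℂ[x]`. -/
abbrev E := Module.End ℂ (Polynomial ℂ)

/-- `Y`: multiplication by `x`. -/
def Yop : E := LinearMap.mulLeft ℂ (X : Polynomial ℂ)

/-- `Z`: the formal derivative. -/
def Zop : E := Polynomial.derivative

/-- `H = Y ∘ Z`. -/
def Hop : E := Yop * Zop

/-- `G = R(H) ∘ Z`. -/
def Gop (R : Polynomial ℂ) : E := aeval Hop R * Zop

/-- `ad_A(B) = A∘B − B∘A`. -/
def ad (A : E) : E → E := fun B => A * B - B * A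

/-- Forward difference of a polynomial: `(Δf)(X) = f(X+1) − f(X)`. -/
def fdiff (S : Polynomial ℂ) : Polynomial ℂ := S.comp (X + 1) - S

/-- `S(X) = R(X−1)·X`. -/
def Spol (R : Polynomial ℂ) : Polynomial ℂ := R.comp (X - 1) * X

/-! ### Auxiliary algebraic lemmas -/

lemma comm_ZY : Zop * Yop = Yop * Zop + 1 := by
  refine LinearMap.ext fun p => ?_
  simp [Zop, Yop, Module.End.mul_apply, derivative_mul, mul_comm]

lemma semiconj_aeval {W A B : E} (h : W * A = B * W) (p : Polynomial ℂ) :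
    W * aeval A p = aeval B p * W := by
  induction p using Polynomial.induction_on' with
  | add f g hf hg => simp [map_add, mul_add, add_mul, hf, hg]
  | monomial n a =>
      have hp : W * A ^ n = B ^ n * W := (SemiconjBy.pow_right h n)
      rw [aeval_monomial, aeval_monomial, ← mul_assoc W, ← Algebra.commutes a W,
        mul_assoc, hp, ← mul_assoc]

lemma ZH : Zop * Hop = (Hop + 1) * Zop := by
  rw [Hop, ← mul_assoc, comm_ZY, add_mul, one_mul, mul_assoc]

lemma HY : Hop * Yop = Yop * (Hop + 1) := by
  rw [Hop, mul_assoc, comm_ZY, mul_add, mul_one, ← mul_assoc]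

lemma Z_aeval (p : Polynomial ℂ) : Zop * aeval Hop p = aeval (Hop + 1) p * Zop :=
  semiconj_aeval ZH p

lemma Y_aeval (p : Polynomial ℂ) : Yop * aeval (Hop + 1) p = aeval Hop p * Yop :=
  semiconj_aeval HY.symm p

lemma aeval_shift (p : Polynomial ℂ) : aeval (Hop + 1) p = aeval Hop (p.comp (X + 1)) := by
  rw [aeval_comp]; simp

lemma aeval_comm (a b : Polynomial ℂ) :
    aeval Hop a * aeval Hop b = aeval Hop b * aeval Hop a := by
  rw [← map_mul, ← map_mul, mul_comm]

lemma G_aeval (R p : Polynomial ℂ) :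
    Gop R * aeval Hop p = aeval Hop (p.comp (X + 1)) * Gop R := by
  rw [Gop, mul_assoc, Z_aeval, aeval_shift, ← mul_assoc, aeval_comm, mul_assoc]

lemma ad_step (R q : Polynomial ℂ) (k : ℕ) :
    ad (Gop R) (aeval Hop q * Gop R ^ k) = aeval Hop (fdiff q) * Gop R ^ (k + 1) := by
  show Gop R * (aeval Hop q * Gop R ^ k) - aeval Hop q * Gop R ^ k * Gop R = _
  rw [← mul_assoc, G_aeval, mul_assoc, ← pow_succ', mul_assoc, ← pow_succ, fdiff,
    map_sub, sub_mul]

lemma Hop_aeval : Hop = aeval Hop (X : Polynomial ℂ) := by simp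

lemma ad_Y (R : Polynomial ℂ) :
    ad (Gop R) Yop = aeval Hop (fdiff (Spol R)) := by
  have hGY : Gop R * Yop = aeval Hop (R * (X + 1)) := by
    rw [Gop, mul_assoc, comm_ZY, ← Hop, map_mul]
    congr 1
    simp [mul_add]
  have hYG : Yop * Gop R = aeval Hop (Spol R) := by
    have h1 : aeval (Hop + 1) (R.comp (X - 1)) = aeval Hop R := by
      rw [aeval_comp]; simp
    have h2 : Yop * aeval Hop R = aeval Hop (R.comp (X - 1)) * Yop := by
      rw [← h1, Y_aeval]
    rw [Gop, ← mul_assoc, h2, mul_assoc, ← Hop, Spol, map_mul]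
    simp
  have h3 : (Spol R).comp (X + 1) = R * (X + 1) := by
    rw [Spol, mul_comp, comp_assoc, X_comp]
    congr 2
    simp [sub_comp]
  rw [ad]
  show Gop R * Yop - Yop * Gop R = _
  rw [hGY, hYG, fdiff, h3, map_sub]

lemma ad_H (R : Polynomial ℂ) : ad (Gop R) Hop = Gop R := by
  show Gop R * Hop - Hop * Gop R = Gop R
  have h1 : Gop R * Hop = aeval Hop R * (Hop + 1) * Zop := by
    rw [Gop, mul_assoc, ZH, ← mul_assoc]
  have hc : Hop * aeval Hop R = aeval Hop R * Hop := by
    have := aeval_comm X R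
    simpa using this
  have h2 : Hop * Gop R = aeval Hop R * Hop * Zop := by
    rw [Gop, ← mul_assoc, hc]
  rw [h1, h2, ← sub_mul, ← mul_sub, add_sub_cancel_left, mul_one, Gop]

lemma adY_iter (R : Polynomial ℂ) :
    ∀ j : ℕ, 1 ≤ j →
      (ad (Gop R))^[j] Yop = aeval Hop (fdiff^[j] (Spol R)) * Gop R ^ (j - 1) := by
  intro j hj
  induction j with
  | zero => omega
  | succ n ih =>
    rcases Nat.eq_or_lt_of_le hj with h1 | h1
    · rw [← h1]
      simp [ad_Y]
    · have hn : 1 ≤ n := by omega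
      rw [Function.iterate_succ_apply', ih hn, ad_step, Function.iterate_succ_apply']
      congr 2
      omega

/-! ### Degree lemmas for the forward difference -/

lemma natDegree_pow_sub_pow (m : ℕ) :
    (((X : Polynomial ℂ) + 1) ^ m - X ^ m).natDegree ≤ m - 1 := by
  have h := add_pow (X : Polynomial ℂ) 1 m
  rw [Finset.sum_range_succ] at h
  simp only [one_pow, mul_one, Nat.choose_self, Nat.cast_one] at h
  rw [h, add_sub_cancel_right]
  refine natDegree_sum_le_of_forall_le _ _ fun k hk => ?_
  have hk' : k ≤ m - 1 := by
    have := Finset.mem_range.mp hk; omega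
  refine le_trans (natDegree_mul_le) ?_
  simpa [natDegree_X_pow, natDegree_natCast] using hk'

lemma fdiff_natDegree_le (n : ℕ) (p : Polynomial ℂ) (h : p.natDegree ≤ n + 1) :
    (fdiff p).natDegree ≤ n := by
  refine Polynomial.induction_with_natDegree_le
    (fun q => (fdiff q).natDegree ≤ n) (n + 1) ?_ ?_ ?_ p h
  · simp [fdiff]
  · intro m r hr hm
    have heq : fdiff (C r * X ^ m) = C r * (((X : Polynomial ℂ) + 1) ^ m - X ^ m) := by
      rw [fdiff, mul_comp, C_comp, X_pow_comp, mul_sub]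
    rw [heq]
    exact le_trans (natDegree_C_mul_le _ _) (le_trans (natDegree_pow_sub_pow m) (by omega))
  · intro f g _ _ hf hg
    have heq : fdiff (f + g) = fdiff f + fdiff g := by
      rw [fdiff, fdiff, fdiff, add_comp]; ring
    rw [heq]
    exact le_trans (natDegree_add_le _ _) (by omega)

lemma fdiff_iterate_zero : ∀ n : ℕ, ∀ p : Polynomial ℂ, p.natDegree ≤ n →
    fdiff^[n + 1] p = 0 := by
  intro n
  induction n with
  | zero =>
    intro p hp
    rw [Polynomial.eq_C_of_natDegree_le_zero hp]
    simp [fdiff]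
  | succ n ih =>
    intro p hp
    rw [Function.iterate_succ_apply]
    exact ih _ (fdiff_natDegree_le n p hp)

lemma natDegree_Spol_le (R : Polynomial ℂ) : (Spol R).natDegree ≤ R.natDegree + 1 := by
  refine le_trans (natDegree_mul_le) ?_
  have h1 : (R.comp (X - 1)).natDegree ≤ R.natDegree := by
    refine le_trans (natDegree_comp_le) ?_
    have : ((X : Polynomial ℂ) - 1).natDegree ≤ 1 :=
      le_trans (natDegree_sub_le _ _) (by simp)
    calc R.natDegree * (X - 1 : Polynomial ℂ).natDegree ≤ R.natDegree * 1 :=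
          Nat.mul_le_mul_left _ this
      _ = R.natDegree := mul_one _
  simp [natDegree_X]
  omega

lemma ad_zero (A : E) : ad A 0 = 0 := by simp [ad]

lemma ad_iter_zero (A : E) (k : ℕ) : (ad A)^[k] 0 = 0 :=
  Function.iterate_fixed (ad_zero A) k

theorem sigma_action (R : Polynomial ℂ) (d : ℕ) (hR : R.natDegree = d) :
    (∀ j : ℕ, 1 ≤ j →
      (ad (Gop R))^[j] Yop = aeval Hop (fdiff^[j] (Spol R)) * Gop R ^ (j - 1)) ∧
    (ad (Gop R))^[d + 2] Yop = 0 ∧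
    (∀ N : ℕ, 1 ≤ N →
      ∑ j ∈ range N, (j.factorial : ℂ)⁻¹ • (ad (Gop R))^[j] (Gop R) = Gop R) ∧
    (∀ N : ℕ, 2 ≤ N →
      ∑ j ∈ range N, (j.factorial : ℂ)⁻¹ • (ad (Gop R))^[j] Hop = Hop + Gop R) ∧
    (∀ N : ℕ, d + 2 ≤ N →
      ∑ j ∈ range N, (j.factorial : ℂ)⁻¹ • (ad (Gop R))^[j] Yop
        = Yop + ∑ j ∈ Icc 1 (d + 1),
            (j.factorial : ℂ)⁻¹ • (aeval Hop (fdiff^[j] (Spol R)) * Gop R ^ (j - 1))) := by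
  -- vanishing of high iterates on Yop
  have hSdeg : (Spol R).natDegree ≤ d + 1 := by
    have := natDegree_Spol_le R
    omega
  have hYzero : (ad (Gop R))^[d + 2] Yop = 0 := by
    rw [adY_iter R (d + 2) (by omega), fdiff_iterate_zero (d + 1) (Spol R) hSdeg]
    simp
  have hYzero' : ∀ j : ℕ, d + 2 ≤ j → (ad (Gop R))^[j] Yop = 0 := by
    intro j hj
    obtain ⟨k, rfl⟩ := Nat.exists_eq_add_of_le hj
    rw [Nat.add_comm, Function.iterate_add_apply, hYzero, ad_iter_zero]
  have hGzero : ∀ j : ℕ, 1 ≤ j → (ad (Gop R))^[j] (Gop R) = 0 := by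
    intro j hj
    obtain ⟨k, rfl⟩ := Nat.exists_eq_add_of_le hj
    rw [Nat.add_comm, Function.iterate_add_apply, Function.iterate_one]
    have : ad (Gop R) (Gop R) = 0 := by simp [ad]
    rw [this, ad_iter_zero]
  have hHzero : ∀ j : ℕ, 2 ≤ j → (ad (Gop R))^[j] Hop = 0 := by
    intro j hj
    obtain ⟨k, rfl⟩ := Nat.exists_eq_add_of_le hj
    rw [Nat.add_comm, Function.iterate_add_apply]
    have h2 : (ad (Gop R))^[2] Hop = 0 := by
      show ad (Gop R) (ad (Gop R) Hop) = 0
      rw [ad_H]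
      simp [ad]
    rw [h2, ad_iter_zero]
  refine ⟨adY_iter R, hYzero, ?_, ?_, ?_⟩
  · -- σ(G) = G
    intro N hN
    rw [Finset.range_eq_Ico, Finset.sum_eq_sum_Ico_succ_bot (by omega : 0 < N)]
    have hz : ∑ j ∈ Ico 1 N, (j.factorial : ℂ)⁻¹ • (ad (Gop R))^[j] (Gop R) = 0 :=
      Finset.sum_eq_zero fun j hj => by
        rw [hGzero j (Finset.mem_Ico.mp hj).1, smul_zero]
    rw [hz]
    simp
  · -- σ(H) = H + G
    intro N hN
    rw [Finset.range_eq_Ico, Finset.sum_eq_sum_Ico_succ_bot (by omega : 0 < N),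
      Finset.sum_eq_sum_Ico_succ_bot (by omega : 0 + 1 < N)]
    have hz : ∑ j ∈ Ico (0 + 1 + 1) N, (j.factorial : ℂ)⁻¹ • (ad (Gop R))^[j] Hop = 0 :=
      Finset.sum_eq_zero fun j hj => by
        have : 2 ≤ j := (Finset.mem_Ico.mp hj).1
        rw [hHzero j this, smul_zero]
    rw [hz]
    simp [ad_H]
  · -- σ(Y)
    intro N hN
    rw [Finset.range_eq_Ico, Finset.sum_eq_sum_Ico_succ_bot (by omega : 0 < N)]
    have hsplit : ∑ j ∈ Ico (0 + 1) N, (j.factorial : ℂ)⁻¹ • (ad (Gop R))^[j] Yop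
        = ∑ j ∈ Ico 1 (d + 2), (j.factorial : ℂ)⁻¹ • (ad (Gop R))^[j] Yop
          + ∑ j ∈ Ico (d + 2) N, (j.factorial : ℂ)⁻¹ • (ad (Gop R))^[j] Yop := by
      rw [Finset.sum_Ico_consecutive _ (by omega : (1:ℕ) ≤ d + 2) (by omega : d + 2 ≤ N)]
    have hz : ∑ j ∈ Ico (d + 2) N, (j.factorial : ℂ)⁻¹ • (ad (Gop R))^[j] Yop = 0 :=
      Finset.sum_eq_zero fun j hj => by
        rw [hYzero' j (Finset.mem_Ico.mp hj).1, smul_zero]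
    have hmain : ∑ j ∈ Ico 1 (d + 2), (j.factorial : ℂ)⁻¹ • (ad (Gop R))^[j] Yop
        = ∑ j ∈ Icc 1 (d + 1),
            (j.factorial : ℂ)⁻¹ • (aeval Hop (fdiff^[j] (Spol R)) * Gop R ^ (j - 1)) := by
      rw [show d + 2 = (d + 1) + 1 by rfl, Finset.Ico_add_one_right_eq_Icc]
      refine Finset.sum_congr rfl fun j hj => ?_
      rw [adY_iter R j (Finset.mem_Icc.mp hj).1]
    rw [hsplit, hz, hmain]
    simp
end
end

section
/- With Y multiplication by x, Z the formal derivative on ℂ[x], H = Y∘Z, G = R(H)∘Z for a fixed polynomial R of degree d, q ∈ ℂ[X] with q(0) = 0 and deg q = l ≥ 1, and P_n^q = e^{q(G)}(x^n): the polynomials P_n^q are eigenfunctions of the differential operator L = H + q'(G)∘G (where q' is the formal derivative of q), namely L(P_n^q) = n·P_n^q for every n ∈ ℕ. -/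
/-!
Since `H G = G H - G`, moving `H` past a polynomial `f(G)` gives `H f(G) = f(G) H - (X f')(G)`.
Write `P_n^q = F(G) xⁿ` with `F = ∑_{j ≤ n} q^j / j!`; then `F' = q' (F - qⁿ / n!)`, so
`L (F(G) xⁿ) = n F(G) xⁿ + (X q' qⁿ / n!)(G) xⁿ`. As `X ∣ q`, the polynomial `X q' qⁿ` is divisible
by `X^(n+1)`, and `G^(n+1)` kills `xⁿ` because `G` lowers degrees by one.
-/

open Polynomial Finset

noncomputable section

/-- `P_n^q = e^{q(G)}(x^n)`, the exponential series being a finite sum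
(all terms with `j > n` vanish). -/
def Pq (R q : Polynomial ℂ) (n : ℕ) : Polynomial ℂ :=
  ∑ j ∈ range (n + 1), (j.factorial : ℂ)⁻¹ • ((aeval (Gop R) q) ^ j) (X ^ n : Polynomial ℂ)

open scoped Nat

section Commutator

variable {S A : Type*} [CommRing S] [Ring A] [Algebra S A]

theorem mul_aeval_of_mul_eq_sub {h g : A} (hhg : h * g = g * h - g) (p : S[X]) :
    h * aeval g p = aeval g p * h - aeval g (X * derivative p) := by
  induction p using Polynomial.induction_on with
  | C a => simp [Algebra.commutes]
  | add p r hp hr =>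
    simp only [map_add, mul_add, add_mul, hp, hr]
    abel
  | monomial k a ih =>
    rw [pow_succ, ← mul_assoc]
    generalize C a * X ^ k = p at ih ⊢
    have hX : X * derivative (p * X) = X * derivative p * X + p * X := by
      rw [derivative_mul, derivative_X]
      ring
    rw [hX, map_add, map_mul, map_mul (aeval g) _ X, aeval_X, ← mul_assoc, ih, sub_mul, mul_assoc,
      hhg, mul_sub, ← mul_assoc]
    abel

end Commutator

section ExpPartialSum

variable {K : Type*} [Field K] [CharZero K]

def expPartialSum (q : K[X]) (n : ℕ) : K[X] :=
  ∑ j ∈ range (n + 1), (j ! : K)⁻¹ • q ^ j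

theorem derivative_expPartialSum (q : K[X]) (n : ℕ) :
    derivative (expPartialSum q n) = derivative q * (expPartialSum q n - (n ! : K)⁻¹ • q ^ n) := by
  induction n with
  | zero => simp [expPartialSum]
  | succ n ih =>
    have hfac : ((n + 1) ! : K)⁻¹ * (n + 1 : ℕ) = (n ! : K)⁻¹ := by
      rw [Nat.factorial_succ, Nat.cast_mul, mul_inv, mul_right_comm,
        inv_mul_cancel₀ (Nat.cast_ne_zero.mpr n.succ_ne_zero), one_mul]
    simp only [expPartialSum, sum_range_succ _ (n + 1), derivative_add, derivative_smul,
      derivative_pow_succ] at ih ⊢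
    rw [ih, add_sub_cancel_right, ← hfac]
    simp only [smul_eq_C_mul, C_mul]
    push_cast
    ring

end ExpPartialSum

theorem Hop_apply (p : ℂ[X]) : Hop p = X * derivative p := rfl

theorem Gop_apply (R p : ℂ[X]) : Gop R p = aeval Hop R (derivative p) := rfl

theorem Hop_X_pow (n : ℕ) : Hop (X ^ n : ℂ[X]) = (n : ℂ) • X ^ n := by
  rcases n with _ | n
  · simp [Hop_apply]
  · rw [Hop_apply, derivative_X_pow, smul_eq_C_mul]
    push_cast
    ring

theorem Hop_mul_Zop : Hop * Zop = Zop * Hop - Zop := by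
  refine LinearMap.ext fun p => ?_
  simp only [Module.End.mul_apply, LinearMap.sub_apply, Hop_apply, Zop,
    derivative_mul, derivative_X, one_mul]
  abel

theorem Hop_mul_Gop (R : ℂ[X]) : Hop * Gop R = Gop R * Hop - Gop R := by
  have hcomm : Commute Hop (aeval Hop R) := by
    simpa using (Commute.all (X : ℂ[X]) R).map (aeval Hop)
  rw [Gop, ← mul_assoc, hcomm.eq, mul_assoc, Hop_mul_Zop, mul_sub, ← mul_assoc]

theorem Gop_X_pow_succ (R : ℂ[X]) (k : ℕ) :
    Gop R (X ^ (k + 1)) = ((k + 1 : ℂ) * R.eval (k : ℂ)) • X ^ k := by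
  rw [Gop_apply, derivative_X_pow, Nat.add_sub_cancel, ← smul_eq_C_mul, map_smul,
    Module.End.aeval_apply_of_mem_apply_eq_smul (Hop_X_pow k), smul_smul]
  push_cast
  rfl

theorem Gop_pow_succ_X_pow (R : ℂ[X]) (n : ℕ) : (Gop R ^ (n + 1)) (X ^ n) = 0 := by
  induction n with
  | zero => simp [Gop_apply]
  | succ n ih => rw [pow_succ, Module.End.mul_apply, Gop_X_pow_succ, map_smul, ih, smul_zero]

theorem aeval_Gop_X_pow_of_dvd (R : ℂ[X]) {n : ℕ} {p : ℂ[X]} (hp : X ^ (n + 1) ∣ p) :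
    aeval (Gop R) p (X ^ n) = 0 := by
  obtain ⟨r, rfl⟩ := hp
  rw [mul_comm, map_mul, aeval_X_pow, Module.End.mul_apply, Gop_pow_succ_X_pow, map_zero]

theorem Pq_eq_aeval_expPartialSum (R q : ℂ[X]) (n : ℕ) :
    Pq R q n = aeval (Gop R) (expPartialSum q n) (X ^ n) := by
  simp only [Pq, expPartialSum, map_sum, map_smul, map_pow, LinearMap.sum_apply,
    LinearMap.smul_apply]

theorem Pq_eigenfunction_general (R : Polynomial ℂ)
    (q : Polynomial ℂ) (hq0 : q.eval 0 = 0) (n : ℕ) :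
    (Hop + aeval (Gop R) (derivative q) * Gop R) (Pq R q n) = (n : ℂ) • Pq R q n := by
  rw [Pq_eq_aeval_expPartialSum]
  set F := expPartialSum q n
  have hT : aeval (Gop R) (derivative q) * Gop R = aeval (Gop R) (X * derivative q) := by
    rw [mul_comm X, map_mul, aeval_X]
  have hH : Hop (aeval (Gop R) F (X ^ n)) =
      (n : ℂ) • aeval (Gop R) F (X ^ n) - aeval (Gop R) (X * derivative F) (X ^ n) := by
    rw [← Module.End.mul_apply, mul_aeval_of_mul_eq_sub (Hop_mul_Gop R), LinearMap.sub_apply,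
      Module.End.mul_apply, Hop_X_pow, map_smul]
  have hdvd : X ^ (n + 1) ∣ X * derivative q * F - X * derivative F := by
    obtain ⟨q₁, rfl⟩ : X ∣ q := by rw [X_dvd_iff, coeff_zero_eq_eval_zero, hq0]
    rw [derivative_expPartialSum, mul_pow]
    exact ⟨C (n ! : ℂ)⁻¹ * derivative (X * q₁) * q₁ ^ n, by rw [smul_eq_C_mul]; ring⟩
  have hcancel := aeval_Gop_X_pow_of_dvd R hdvd
  rw [map_sub, LinearMap.sub_apply, sub_eq_zero, map_mul (aeval (Gop R)) (X * derivative q) F,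
    Module.End.mul_apply] at hcancel
  rw [LinearMap.add_apply, hT, hH, hcancel, sub_add_cancel]

/-- The polynomials `P_n^q` are eigenfunctions of `L = H + q'(G)∘G` with eigenvalue `n`. -/
theorem Pq_eigenfunction (R : Polynomial ℂ) (d : ℕ) (hR : R.natDegree = d)
    (q : Polynomial ℂ) (hq0 : q.eval 0 = 0) (l : ℕ) (hl : 1 ≤ l)
    (hql : q.natDegree = l) (n : ℕ) :
    (Hop + aeval (Gop R) (derivative q) * Gop R) (Pq R q n) = (n : ℂ) • Pq R q n :=
  Pq_eigenfunction_general R q hq0 n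

end
end
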